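/- arXiv:2102.04891 — 2 statements merged into one kernel-verified Lean document; each statement's English description precedes it below -/
import Mathlib

section
/- For every real x > 0, the Binet function satisfies 0 < μ(x) ≤ 1/(12x), where μ(x) = log Γ(x) − (x − 1/2)·log x + x − (1/2)·log(2π). -/
/-!
The increment `μ(x) - μ(x + 1) = (x + 1/2) log (1 + 1/x) - 1` expands, through the series of
`log ((1 + u) / (1 - u))` at `u = 1 / (2x + 1)`, as `∑_{k ≥ 1} u^(2k) / (2k + 1)`: a series of
positive terms dominated by `∑_{k ≥ 1} u^(2k) / 3 = 1/(12x) - 1/(12(x + 1))`. Since `μ(x + n) → 0`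
(Stirling's formula for `n!` combined with the Euler–Gauss limit `Γ(x + n + 1) ~ n! n^x`),
telescoping these two bounds along `x, x + 1, x + 2, …` yields the claim.
-/

/-- The real Binet function. -/
noncomputable def binetMu (x : ℝ) : ℝ :=
  Real.log (Real.Gamma x) - (x - 1/2) * Real.log x + x - (1/2) * Real.log (2 * Real.pi)

open Real Filter Topology
open scoped Nat

lemma binetMu_sub_binetMu_add_one {x : ℝ} (hx : 0 < x) :
    binetMu x - binetMu (x + 1) = (x + 1 / 2) * log (1 + x⁻¹) - 1 := by
  have h : 1 + x⁻¹ = (x + 1) / x := by field_simp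
  rw [binetMu, binetMu, Gamma_add_one hx.ne', log_mul hx.ne' (Gamma_pos_of_pos hx).ne', h,
    log_div (by positivity) hx.ne']
  ring

lemma hasSum_binetMu_sub_binetMu_add_one {x : ℝ} (hx : 0 < x) :
    HasSum (fun k : ℕ => 1 / (2 * (k + 1 : ℝ) + 1) * ((1 / (2 * x + 1)) ^ 2) ^ (k + 1))
      (binetMu x - binetMu (x + 1)) := by
  have hseries := (hasSum_log_one_add_inv hx).mul_left (x + 1 / 2)
  have hterm : ∀ k : ℕ, (x + 1 / 2) * (2 * (1 / (2 * k + 1)) * (1 / (2 * x + 1)) ^ (2 * k + 1))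
      = 1 / (2 * k + 1) * ((1 / (2 * x + 1)) ^ 2) ^ k := fun k => by
    rw [← pow_mul, pow_succ]; field_simp
  simp only [hterm] at hseries
  rw [← hasSum_nat_add_iff' 1] at hseries
  simpa [binetMu_sub_binetMu_add_one hx] using hseries

lemma binetMu_add_one_lt {x : ℝ} (hx : 0 < x) : binetMu (x + 1) < binetMu x :=
  sub_pos.1 <| hasSum_lt (f := 0) (i := 0) (fun k => by positivity) (by positivity) hasSum_zero
    (hasSum_binetMu_sub_binetMu_add_one hx)

lemma binetMu_sub_binetMu_add_one_le {x : ℝ} (hx : 0 < x) :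
    binetMu x - binetMu (x + 1) ≤ 1 / (12 * x) - 1 / (12 * (x + 1)) := by
  set r : ℝ := (1 / (2 * x + 1)) ^ 2 with hr
  have hr1 : r < 1 := by
    rw [hr, div_pow, one_pow, div_lt_one (by positivity)]; nlinarith
  have hgeom : HasSum (fun k : ℕ => r ^ (k + 1) / 3) (1 / (12 * x) - 1 / (12 * (x + 1))) := by
    have h := ((hasSum_geometric_of_lt_one (by positivity) hr1).mul_left r).div_const 3
    simp only [← pow_succ'] at h
    have hval : r * (1 - r)⁻¹ / 3 = 1 / (12 * x) - 1 / (12 * (x + 1)) := by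
      have h1r : 1 - r = 4 * x * (x + 1) / (2 * x + 1) ^ 2 := by rw [hr]; field_simp; ring
      rw [h1r, hr]; field_simp; ring
    rwa [hval] at h
  refine hasSum_le (fun k => ?_) (hasSum_binetMu_sub_binetMu_add_one hx) hgeom
  rw [← hr, one_div_mul_eq_div]
  gcongr
  linarith [(Nat.cast_nonneg k : (0:ℝ) ≤ k)]

lemma antitone_binetMu_add_nat {x : ℝ} (hx : 0 < x) :
    Antitone fun n : ℕ => binetMu (x + n) :=
  antitone_nat_of_succ_le fun n => by
    simpa [add_assoc] using (binetMu_add_one_lt (by positivity : 0 < x + n)).le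

lemma monotone_binetMu_add_nat_sub {x : ℝ} (hx : 0 < x) :
    Monotone fun n : ℕ => binetMu (x + n) - 1 / (12 * (x + n)) :=
  monotone_nat_of_le_succ fun n => by
    have := binetMu_sub_binetMu_add_one_le (by positivity : 0 < x + n)
    push_cast
    rw [← add_assoc]
    linarith

lemma tendsto_add_mul_log_one_add_div_atTop (c t : ℝ) :
    Tendsto (fun y : ℝ => (y + c) * log (1 + t / y)) atTop (𝓝 t) := by
  have hlog : Tendsto (fun y : ℝ => log (1 + t / y)) atTop (𝓝 0) := by
    have h : Tendsto (fun y : ℝ => 1 + t / y) atTop (𝓝 (1 + 0)) :=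
      tendsto_const_nhds.add (tendsto_const_nhds.div_atTop tendsto_id)
    rw [add_zero] at h
    simpa [Function.comp_def] using (continuousAt_log one_ne_zero).tendsto.comp h
  simpa [add_mul] using (tendsto_mul_log_one_add_div_atTop t).add (hlog.const_mul c)

lemma tendsto_log_factorial_sub_stirling :
    Tendsto (fun n : ℕ => log n ! - ((n + 1 / 2) * log n - n + 1 / 2 * log (2 * π)))
      atTop (𝓝 0) := by
  have hlim : Tendsto (fun n : ℕ => log (Stirling.stirlingSeq n) - log √π) atTop (𝓝 0) := by
    simpa using ((continuousAt_log (by positivity)).tendsto.comp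
      Stirling.tendsto_stirlingSeq_sqrt_pi).sub_const (log √π)
  refine hlim.congr' (eventually_ne_atTop 0 |>.mono fun n hn => ?_)
  have hn : (0 : ℝ) < n := by positivity
  rw [Stirling.log_stirlingSeq_formula, log_sqrt pi_pos.le, log_mul two_ne_zero hn.ne',
    log_mul two_ne_zero pi_ne_zero, log_div hn.ne' (exp_ne_zero 1), log_exp]
  ring

lemma tendsto_log_Gamma_add_nat_sub_log_factorial {x : ℝ} (hx : 0 < x) :
    Tendsto (fun n : ℕ => log (Gamma (x + (n + 1))) - log n ! - x * log n) atTop (𝓝 0) := by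
  have hfeq : ∀ {y : ℝ}, 0 < y → (log ∘ Gamma) (y + 1) = (log ∘ Gamma) y + log y := fun hy => by
    simp only [Function.comp_apply, Gamma_add_one hy.ne',
      log_mul hy.ne' (Gamma_pos_of_pos hy).ne', add_comm]
  have h := (BohrMollerup.tendsto_log_gamma hx).const_sub (log (Gamma x))
  rw [sub_self] at h
  refine h.congr fun n => ?_
  have hprod := BohrMollerup.f_add_nat_eq hfeq hx (n + 1)
  simp only [Function.comp_apply, Nat.cast_add_one] at hprod
  rw [BohrMollerup.logGammaSeq, hprod]
  ring

lemma tendsto_binetMu_add_nat {x : ℝ} (hx : 0 < x) :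
    Tendsto (fun n : ℕ => binetMu (x + n)) atTop (𝓝 0) := by
  rw [← tendsto_add_atTop_iff_nat 1]
  have h := ((tendsto_log_Gamma_add_nat_sub_log_factorial hx).add
    tendsto_log_factorial_sub_stirling).sub
      ((tendsto_add_mul_log_one_add_div_atTop (x + 1 / 2) (x + 1)).comp
        tendsto_natCast_atTop_atTop)
  rw [zero_add, zero_sub] at h
  have h' := h.add_const (x + 1)
  rw [neg_add_cancel] at h'
  refine h'.congr' (eventually_ne_atTop 0 |>.mono fun n hn => ?_)
  have hn : (0 : ℝ) < n := by positivity
  have hlog : log (1 + (x + 1) / n) = log (x + (n + 1)) - log n := by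
    rw [← log_div (by positivity) hn.ne']; congr 1; field_simp; ring
  simp only [Function.comp_apply, hlog, binetMu, Nat.cast_add_one]
  ring

theorem binetMu_pos_and_le (x : ℝ) (hx : 0 < x) :
    0 < binetMu x ∧ binetMu x ≤ 1 / (12 * x) := by
  have hlim := tendsto_binetMu_add_nat hx
  have hinv : Tendsto (fun n : ℕ => 1 / (12 * (x + n))) atTop (𝓝 0) :=
    tendsto_const_nhds.div_atTop <| (tendsto_atTop_add_const_left _ x
      tendsto_natCast_atTop_atTop).const_mul_atTop (by norm_num)
  constructor
  · calc 0 ≤ binetMu (x + 1) := by simpa using (antitone_binetMu_add_nat hx).le_of_tendsto hlim 1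
      _ < binetMu x := binetMu_add_one_lt hx
  · have h := (monotone_binetMu_add_nat_sub hx).ge_of_tendsto (hlim.sub hinv) 0
    simpa [sub_nonpos] using h
end

section
/- For every complex z not on the nonpositive real axis, ∫_z^{z+1} log Γ(t) dt = z·log z − z + (1/2)·log(2π), equivalently ∫_z^{z+1} μ(t) dt = (1/2)·(z(z+1)·log(z/(z+1)) + z + 1/2) where μ is the Binet function; in particular for real z > 0. -/
/-! Since `Γ (z + 1) = z Γ z`, the derivative of `z ↦ ∫ t in z..z + 1, log (Γ t)` is `log z`,
so on `(0, ∞)` this integral is `z log z - z + C`. Integrating Legendre's duplication formula over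
`[z, z + 1/2]` gives `C = C / 2 + log (2π) / 4`. The integral of the Binet function then reduces
to elementary antiderivatives. -/

open Real Set intervalIntegral
open MeasureTheory (volume)

theorem hasDerivAt_integral_add_one {f : ℝ → ℝ} {a z : ℝ} (hf : ContinuousOn f (Ioi a))
    (hz : a < z) :
    HasDerivAt (fun x => ∫ t in x..x + 1, f t) (f (z + 1) - f z) z := by
  have hz1 : a < z + 1 := by linarith
  have hint : IntervalIntegrable f volume z (z + 1) :=
    (hf.mono fun _ ht => (lt_min hz hz1).trans_le ht.1).intervalIntegrable
  have hF := integral_hasStrictFDerivAt hint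
    (hf.stronglyMeasurableAtFilter isOpen_Ioi z hz)
    (hf.stronglyMeasurableAtFilter isOpen_Ioi _ hz1)
    (hf.continuousAt (Ioi_mem_nhds hz)) (hf.continuousAt (Ioi_mem_nhds hz1))
  simpa [Function.comp_def] using
    hF.hasFDerivAt.comp_hasDerivAt z ((hasDerivAt_id z).prodMk ((hasDerivAt_id z).add_const 1))

theorem continuousOn_log_Gamma : ContinuousOn (fun t => log (Gamma t)) (Ioi 0) :=
  fun x hx => ((differentiableAt_Gamma fun m => by
    linarith [mem_Ioi.mp hx, (Nat.cast_nonneg m : (0:ℝ) ≤ m)]).continuousAt.log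
    (Gamma_pos_of_pos hx).ne').continuousWithinAt

theorem intervalIntegrable_log_Gamma {a b : ℝ} (ha : 0 < a) (hb : 0 < b) :
    IntervalIntegrable (fun t => log (Gamma t)) volume a b :=
  (continuousOn_log_Gamma.mono fun _ ht => (lt_min ha hb).trans_le ht.1).intervalIntegrable

theorem hasDerivAt_integral_log_Gamma {z : ℝ} (hz : 0 < z) :
    HasDerivAt (fun x => ∫ t in x..x + 1, log (Gamma t)) (log z) z := by
  convert hasDerivAt_integral_add_one continuousOn_log_Gamma hz using 1
  rw [Gamma_add_one hz.ne', log_mul hz.ne' (Gamma_pos_of_pos hz).ne']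
  ring

theorem exists_integral_log_Gamma_eq : ∃ C, ∀ z, 0 < z →
    ∫ t in z..z + 1, log (Gamma t) = z * log z - z + C := by
  have hderiv : ∀ z, 0 < z → HasDerivAt (fun x => x * log x - x) (log z) z := fun z hz => by
    simpa using (hasDerivAt_mul_log hz.ne').fun_sub (hasDerivAt_id z)
  obtain ⟨C, hC⟩ := isOpen_Ioi.exists_eq_add_of_deriv_eq isPreconnected_Ioi
    (fun z hz => (hasDerivAt_integral_log_Gamma hz).differentiableAt.differentiableWithinAt)
    (fun z hz => (hderiv z hz).differentiableAt.differentiableWithinAt)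
    (fun z hz => (hasDerivAt_integral_log_Gamma hz).deriv.trans (hderiv z hz).deriv.symm)
  exact ⟨C, fun z hz => hC hz⟩

theorem log_Gamma_add_log_Gamma_add_half {s : ℝ} (hs : 0 < s) :
    log (Gamma s) + log (Gamma (s + 1/2)) =
      log (Gamma (2 * s)) + (1 - 2 * s) * log 2 + log π / 2 := by
  have h := congrArg log (Gamma_mul_Gamma_add_half s)
  rwa [log_mul (Gamma_pos_of_pos hs).ne' (Gamma_pos_of_pos (by linarith)).ne',
    log_mul (by positivity) (sqrt_pos.2 pi_pos).ne',
    log_mul (Gamma_pos_of_pos (by linarith)).ne' (by positivity),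
    log_rpow two_pos, log_sqrt pi_pos.le] at h

theorem integral_one_sub_two_mul_log_two_add {z : ℝ} :
    ∫ s in z..z + 1/2, ((1 - 2 * s) * log 2 + log π / 2) = (1/4 - z) * log 2 + log π / 4 := by
  have hint : IntervalIntegrable (fun s : ℝ => 2 * log 2 * s) volume z (z + 1/2) :=
    (continuous_const.mul continuous_id).intervalIntegrable _ _
  simp_rw [show ∀ s : ℝ, (1 - 2 * s) * log 2 + log π / 2 = (log 2 + log π / 2) - 2 * log 2 * s
    from fun s => by ring]
  rw [integral_sub intervalIntegrable_const hint, integral_const,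
    integral_const_mul, integral_id, smul_eq_mul]
  ring

theorem integral_log_Gamma_duplication {z : ℝ} (hz : 0 < z) :
    ∫ t in z..z + 1, log (Gamma t) =
      (1/2) * (∫ t in 2 * z..2 * z + 1, log (Gamma t)) + (1/4 - z) * log 2 + log π / 4 := by
  have hpos : ∀ s ∈ uIcc z (z + 1/2), 0 < s := fun s hs =>
    (lt_min hz (by linarith)).trans_le hs.1
  have hint {g : ℝ → ℝ} (hg : Continuous g) (hg0 : ∀ s, 0 < s → 0 < g s) :
      IntervalIntegrable (fun s => log (Gamma (g s))) volume z (z + 1/2) :=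
    (continuousOn_log_Gamma.comp hg.continuousOn
      fun s hs => hg0 s (hpos s hs)).intervalIntegrable
  have hshift : ∫ t in z + 1/2..z + 1, log (Gamma t) =
      ∫ s in z..z + 1/2, log (Gamma (s + 1/2)) := by
    rw [integral_comp_add_right (fun t => log (Gamma t))]
    ring_nf
  have hdouble : ∫ s in z..z + 1/2, log (Gamma (2 * s)) =
      (1/2) * ∫ t in 2 * z..2 * z + 1, log (Gamma t) := by
    rw [integral_comp_mul_left (fun t => log (Gamma t)) two_ne_zero]
    norm_num [mul_add]
  calc ∫ t in z..z + 1, log (Gamma t)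
      = (∫ s in z..z + 1/2, log (Gamma s)) + ∫ s in z..z + 1/2, log (Gamma (s + 1/2)) := by
        rw [← hshift, integral_add_adjacent_intervals
          (intervalIntegrable_log_Gamma hz (by linarith))
          (intervalIntegrable_log_Gamma (by linarith) (by linarith))]
    _ = ∫ s in z..z + 1/2, (log (Gamma s) + log (Gamma (s + 1/2))) :=
        (integral_add (hint continuous_id fun _ => id)
          (hint (continuous_add_const _) fun _ hs => by positivity)).symm
    _ = ∫ s in z..z + 1/2, (log (Gamma (2 * s)) + ((1 - 2 * s) * log 2 + log π / 2)) :=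
        integral_congr fun s hs => by
          rw [log_Gamma_add_log_Gamma_add_half (hpos s hs), add_assoc]
    _ = (∫ s in z..z + 1/2, log (Gamma (2 * s))) +
          ∫ s in z..z + 1/2, ((1 - 2 * s) * log 2 + log π / 2) :=
        integral_add (hint (continuous_const_mul 2) fun _ hs => by positivity)
          (Continuous.intervalIntegrable (by fun_prop) _ _)
    _ = _ := by
        rw [hdouble, integral_one_sub_two_mul_log_two_add]
        ring

theorem integral_log_Gamma {z : ℝ} (hz : 0 < z) :
    ∫ t in z..z + 1, log (Gamma t) = z * log z - z + log (2 * π) / 2 := by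
  obtain ⟨C, hC⟩ := exists_integral_log_Gamma_eq
  have hdup := integral_log_Gamma_duplication hz
  rw [hC z hz, hC (2 * z) (by positivity), log_mul two_ne_zero hz.ne'] at hdup
  rw [hC z hz, log_mul two_ne_zero pi_ne_zero]
  linarith

theorem intervalIntegrable_sub_half_mul_log {a b : ℝ} :
    IntervalIntegrable (fun t => (t - 1/2) * log t) volume a b :=
  intervalIntegrable_log'.continuousOn_mul (by fun_prop)

theorem integral_sub_half_mul_log {a b : ℝ} (ha : 0 < a) (hb : 0 < b) :
    ∫ t in a..b, (t - 1/2) * log t =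
      ((b ^ 2 - b) / 2 * log b - b ^ 2 / 4 + b / 2) -
        ((a ^ 2 - a) / 2 * log a - a ^ 2 / 4 + a / 2) := by
  refine integral_eq_sub_of_hasDerivAt (f := fun t => (t ^ 2 - t) / 2 * log t - t ^ 2 / 4 + t / 2)
    (fun t ht => ?_) intervalIntegrable_sub_half_mul_log
  have ht0 : t ≠ 0 := ((lt_min ha hb).trans_le ht.1).ne'
  have hquad : HasDerivAt (fun t : ℝ => (t ^ 2 - t) / 2) (t - 1/2) t :=
    (((hasDerivAt_pow 2 t).fun_sub (hasDerivAt_id' t)).div_const 2).congr_deriv (by ring)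
  refine (((hquad.fun_mul (hasDerivAt_log ht0)).fun_sub
    ((hasDerivAt_pow 2 t).div_const 4)).fun_add ((hasDerivAt_id' t).div_const 2)).congr_deriv ?_
  field_simp
  ring

theorem integral_binetMu {z : ℝ} (hz : 0 < z) :
    ∫ t in z..z + 1, binetMu t = (1/2) * (z * (z + 1) * log (z / (z + 1)) + z + 1/2) := by
  have hz1 : 0 < z + 1 := by linarith
  have hint := intervalIntegrable_log_Gamma hz hz1
  have hsplit : ∫ t in z..z + 1, binetMu t =
      (∫ t in z..z + 1, log (Gamma t)) - (∫ t in z..z + 1, (t - 1/2) * log t) +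
        ∫ t in z..z + 1, (t - log (2 * π) / 2) := by
    rw [← integral_sub hint intervalIntegrable_sub_half_mul_log,
      ← integral_add (hint.sub intervalIntegrable_sub_half_mul_log)
        (Continuous.intervalIntegrable (by fun_prop) _ _)]
    refine integral_congr fun t _ => ?_
    simp only [binetMu]
    ring
  rw [hsplit, integral_log_Gamma hz, integral_sub_half_mul_log hz hz1,
    integral_sub intervalIntegrable_id intervalIntegrable_const, integral_id,
    integral_const, smul_eq_mul, log_div hz.ne' hz1.ne']
  ring

theorem integral_logGamma_and_binetMu (z : ℝ) (hz : 0 < z) :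
    (∫ t in z..(z + 1), Real.log (Real.Gamma t)) =
      z * Real.log z - z + (1/2) * Real.log (2 * Real.pi) ∧
    (∫ t in z..(z + 1), binetMu t) =
      (1/2) * (z * (z + 1) * Real.log (z / (z + 1)) + z + 1/2) :=
  ⟨by rw [integral_log_Gamma hz]; ring, integral_binetMu hz⟩
end
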